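/- arXiv:0904.0109 — 7 statements merged into one kernel-verified Lean document; each statement's English description precedes it below -/
import Mathlib

section
/- In an authentication code with k source states, v messages, and encoding rules that are injective maps from source states to messages, the deception probability for a spoofing attack of order i satisfies P_{d_i} ≥ (k−i)/(v−i), for 0 ≤ i < k ≤ v. -/
/-!
Fix the i observed messages O. Summing, over the v − i messages m' ∉ O, the weight of the
rules whose image contains O ∪ {m'} counts every rule whose image contains O exactly k − i
times, once for each message of its image outside O. So these v − i weights average to
(k − i)/(v − i) times the weight of the rules containing O, and one of them is at least that.
-/

open Finset

section

variable {E M : Type*} [Fintype E] [Fintype M] [DecidableEq M]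

theorem sum_compl_sum_filter_insert_subset {R : Type*} [AddCommMonoid R]
    (im : E → Finset M) (p : E → R) (O : Finset M) :
    ∑ m ∈ Oᶜ, ∑ e with insert m O ⊆ im e, p e = ∑ e with O ⊆ im e, #(im e \ O) • p e := by
  simp_rw [← sum_const]
  refine sum_comm' fun m e => ?_
  simp only [mem_compl, mem_filter, mem_univ, true_and, mem_sdiff, insert_subset_iff]
  tauto

theorem exists_notMem_mul_sum_filter_le_sum_filter_insert {K : Type*} [Field K] [LinearOrder K]
    [IsStrictOrderedRing K] (im : E → Finset M) (p : E → K) (k : ℕ) (hcard : ∀ e, #(im e) = k)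
    (O : Finset M) (hO : #O < Fintype.card M) :
    ∃ m ∉ O, ((k : K) - #O) / ((Fintype.card M : K) - #O) * ∑ e with O ⊆ im e, p e
      ≤ ∑ e with insert m O ⊆ im e, p e := by
  have hcompl : (#Oᶜ : K) = (Fintype.card M : K) - #O := by
    rw [card_compl, Nat.cast_sub hO.le]
  have hpos : (0 : K) < (Fintype.card M : K) - #O := sub_pos.mpr (by exact_mod_cast hO)
  have hsum : ∑ m ∈ Oᶜ, ∑ e with insert m O ⊆ im e, p e
      = ((k : K) - #O) * ∑ e with O ⊆ im e, p e := by
    rw [sum_compl_sum_filter_insert_subset, mul_sum]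
    refine sum_congr rfl fun e he => ?_
    have hOe : O ⊆ im e := (mem_filter.mp he).2
    rw [nsmul_eq_mul, card_sdiff_of_subset hOe, Nat.cast_sub (hcard e ▸ card_le_card hOe), hcard]
  obtain ⟨m, hm, hle⟩ := exists_le_of_sum_le (s := Oᶜ) (card_pos.mp (by rw [card_compl]; omega))
    (f := fun _ => ((k : K) - #O) / ((Fintype.card M : K) - #O) * ∑ e with O ⊆ im e, p e)
    (g := fun m => ∑ e with insert m O ⊆ im e, p e)
    (by rw [sum_const, nsmul_eq_mul, hcompl, hsum, ← mul_assoc, mul_div_cancel₀ _ hpos.ne'])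
  exact ⟨m, mem_compl.mp hm, hle⟩

end

theorem stmt7_general {S M E : Type*} [Fintype S] [Fintype M] [Fintype E] [DecidableEq M]
    (k v i : ℕ) (hk : Fintype.card S = k) (hv : Fintype.card M = v)
    (hik : i < k) (hkv : k ≤ v)
    (enc : E → (S ↪ M)) (pE : E → ℝ)
    (hsum : ∑ e, pE e = 1) :
    ∃ O : Finset M, O.card = i ∧
      (∃ e : E, 0 < pE e ∧ O ⊆ Finset.image (enc e) Finset.univ) ∧
      ∃ m' : M, m' ∉ O ∧
        ((k : ℝ) - i) / ((v : ℝ) - i) *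
            (∑ e ∈ Finset.univ.filter
              (fun e => O ⊆ Finset.image (enc e) Finset.univ), pE e)
          ≤ ∑ e ∈ Finset.univ.filter
              (fun e => insert m' O ⊆ Finset.image (enc e) Finset.univ), pE e := by
  obtain ⟨e₀, -, he₀⟩ : ∃ e ∈ univ, (0 : ℝ) < pE e :=
    exists_lt_of_sum_lt (by rw [sum_const_zero, hsum]; exact one_pos)
  have hcard : ∀ e, #(univ.image (enc e)) = k := fun e => by
    rw [card_image_of_injective _ (enc e).injective, card_univ, hk]
  obtain ⟨O, hOsub, rfl⟩ := exists_subset_card_eq ((hcard e₀).symm ▸ hik.le)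
  subst hv
  exact ⟨O, rfl, ⟨e₀, he₀, hOsub⟩,
    exists_notMem_mul_sum_filter_le_sum_filter_insert _ pE k hcard O (by omega)⟩

/-- Massey's bound: in an authentication code with k source states and v messages,
the deception probability for spoofing of order i is at least (k−i)/(v−i): there is
a set O of i observable messages and a fresh message m' whose (unnormalized)
conditional probability of being valid is at least (k−i)/(v−i). -/
theorem stmt7 {S M E : Type*} [Fintype S] [Fintype M] [Fintype E] [DecidableEq M]
    (k v i : ℕ) (hk : Fintype.card S = k) (hv : Fintype.card M = v)
    (hik : i < k) (hkv : k ≤ v)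
    (enc : E → (S ↪ M)) (pE : E → ℝ)
    (hpE : ∀ e, 0 ≤ pE e) (hsum : ∑ e, pE e = 1) :
    ∃ O : Finset M, O.card = i ∧
      (∃ e : E, 0 < pE e ∧ O ⊆ Finset.image (enc e) Finset.univ) ∧
      ∃ m' : M, m' ∉ O ∧
        ((k : ℝ) - i) / ((v : ℝ) - i) *
            (∑ e ∈ Finset.univ.filter
              (fun e => O ⊆ Finset.image (enc e) Finset.univ), pE e)
          ≤ ∑ e ∈ Finset.univ.filter
              (fun e => insert m' O ⊆ Finset.image (enc e) Finset.univ), pE e :=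
  stmt7_general k v i hk hv hik hkv enc pE hsum
end

section
/- If an authentication code with k source states and v messages is (t−1)-fold secure against spoofing, then the number of encoding rules b satisfies b ≥ C(v,t)/C(k,t). -/
/-!
Let `w T` be the total weight of the encoding rules whose image contains the message set `T`.
Security of order `i` says `w (insert m O) ≤ (k - i)/(v - i) · w O`, so every `t`-set of
messages has `w T ≤ ∏_{j<t} (k - j)/(v - j) = C(k,t)/C(v,t)`. On the other hand every rule
covers exactly `C(k,t)` of the `t`-sets, so these `C(v,t)` weights sum to `C(k,t)`: the bound is
attained everywhere, every `t`-set has nonzero weight and hence lies in the image of some rule.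
Covering all `C(v,t)` sets by `b` families of `C(k,t)` sets gives `b · C(k,t) ≥ C(v,t)`.
-/

open Finset

theorem prod_range_natCast_sub_div_natCast_sub (k v t : ℕ) :
    ∏ j ∈ range t, ((k : ℝ) - j) / ((v : ℝ) - j) = (k.choose t : ℝ) / v.choose t := by
  rw [prod_div_distrib, prod_range_natCast_sub, prod_range_natCast_sub,
    ← Nat.descFactorial_eq_prod_range, ← Nat.descFactorial_eq_prod_range,
    Nat.descFactorial_eq_factorial_mul_choose, Nat.descFactorial_eq_factorial_mul_choose]
  push_cast
  exact mul_div_mul_left _ _ (by positivity)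

theorem le_prod_range_mul_of_insert_le {α : Type*} [DecidableEq α] {w : Finset α → ℝ}
    {r : ℕ → ℝ} {n : ℕ} (hr : ∀ i < n, 0 ≤ r i)
    (hstep : ∀ i < n, ∀ O : Finset α, O.card = i → ∀ m ∉ O, w (insert m O) ≤ r i * w O)
    (T : Finset α) (hT : T.card ≤ n) : w T ≤ (∏ j ∈ range T.card, r j) * w ∅ := by
  induction T using Finset.induction_on with
  | empty => simp
  | insert m O hm ih =>
    rw [card_insert_of_notMem hm] at hT ⊢
    calc w (insert m O) ≤ r O.card * w O := hstep _ (by omega) O rfl m hm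
      _ ≤ r O.card * ((∏ j ∈ range O.card, r j) * w ∅) :=
        mul_le_mul_of_nonneg_left (ih (by omega)) (hr _ (by omega))
      _ = (∏ j ∈ range (O.card + 1), r j) * w ∅ := by rw [prod_range_succ]; ring

section CoverWeight

variable {α ι : Type*} [DecidableEq α] [Fintype ι]

def coverWeight (A : ι → Finset α) (p : ι → ℝ) (T : Finset α) : ℝ :=
  ∑ e ∈ univ.filter (fun e => T ⊆ A e), p e

theorem coverWeight_empty (A : ι → Finset α) (p : ι → ℝ) : coverWeight A p ∅ = ∑ e, p e := by
  simp [coverWeight]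

theorem exists_subset_of_coverWeight_ne_zero {A : ι → Finset α} {p : ι → ℝ} {T : Finset α}
    (h : coverWeight A p T ≠ 0) : ∃ e, T ⊆ A e := by
  obtain ⟨e, he, -⟩ := exists_ne_zero_of_sum_ne_zero h
  exact ⟨e, (mem_filter.1 he).2⟩

theorem sum_coverWeight_powersetCard [Fintype α] {A : ι → Finset α} {k : ℕ}
    (hA : ∀ e, (A e).card = k) (p : ι → ℝ) (t : ℕ) :
    ∑ T ∈ powersetCard t univ, coverWeight A p T = k.choose t * ∑ e, p e := by
  simp only [coverWeight, sum_filter]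
  rw [sum_comm, mul_sum]
  refine sum_congr rfl fun e _ => ?_
  have : (powersetCard t univ).filter (· ⊆ A e) = powersetCard t (A e) := by
    ext T
    simp only [mem_filter, mem_powersetCard, subset_univ, true_and]
    tauto
  rw [← sum_filter, this, sum_const, nsmul_eq_mul, card_powersetCard, hA]

end CoverWeight

theorem choose_le_card_mul_choose_of_forall_exists_subset {α ι : Type*} [Fintype α] [Fintype ι]
    [DecidableEq α] {A : ι → Finset α} {k t : ℕ} (hA : ∀ e, (A e).card = k)
    (hcover : ∀ T ∈ powersetCard t (univ : Finset α), ∃ e, T ⊆ A e) :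
    (Fintype.card α).choose t ≤ Fintype.card ι * k.choose t := by
  have hsub : powersetCard t univ ⊆ univ.biUnion fun e => powersetCard t (A e) := by
    intro T hT
    obtain ⟨e, he⟩ := hcover T hT
    exact mem_biUnion.2 ⟨e, mem_univ e, mem_powersetCard.2 ⟨he, (mem_powersetCard.1 hT).2⟩⟩
  calc (Fintype.card α).choose t = (powersetCard t (univ : Finset α)).card := by
        rw [card_powersetCard, card_univ]
    _ ≤ ∑ e, (powersetCard t (A e)).card := (card_le_card hsub).trans card_biUnion_le
    _ = Fintype.card ι * k.choose t := by simp [card_powersetCard, hA]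

theorem stmt8_general {S M E : Type*} [Fintype S] [Fintype M] [Fintype E] [DecidableEq M]
    (k v t : ℕ) (hk : Fintype.card S = k) (hv : Fintype.card M = v)
    (htk : t ≤ k) (hkv : k ≤ v)
    (enc : E → (S ↪ M)) (pE : E → ℝ)
    (hsum : ∑ e, pE e = 1)
    (hsec : ∀ i < t, ∀ O : Finset M, O.card = i → ∀ m' ∉ O,
      (∑ e ∈ Finset.univ.filter
          (fun e => insert m' O ⊆ Finset.image (enc e) Finset.univ), pE e)
        ≤ ((k : ℝ) - i) / ((v : ℝ) - i) *
            (∑ e ∈ Finset.univ.filter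
              (fun e => O ⊆ Finset.image (enc e) Finset.univ), pE e)) :
    ((v.choose t : ℝ) / (k.choose t : ℝ)) ≤ (Fintype.card E : ℝ) := by
  set A : E → Finset M := fun e => univ.image (enc e)
  have hA : ∀ e, (A e).card = k := fun e => by
    rw [card_image_of_injective _ (enc e).injective, card_univ, hk]
  set c : ℝ := (k.choose t : ℝ) / v.choose t
  have hkc : (0 : ℝ) < k.choose t := by exact_mod_cast Nat.choose_pos htk
  have hvc : (0 : ℝ) < v.choose t := by exact_mod_cast Nat.choose_pos (htk.trans hkv)
  have hc : 0 < c := div_pos hkc hvc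
  have hratio : ∀ i < t, 0 ≤ ((k : ℝ) - i) / ((v : ℝ) - i) := fun i hi => by
    have : (i : ℝ) < k := by exact_mod_cast hi.trans_le htk
    have : (k : ℝ) ≤ v := by exact_mod_cast hkv
    exact div_nonneg (by linarith) (by linarith)
  have hle : ∀ T ∈ powersetCard t univ, coverWeight A pE T ≤ c := fun T hT => by
    have hTt := (mem_powersetCard.1 hT).2
    have := le_prod_range_mul_of_insert_le (w := coverWeight A pE) hratio hsec T hTt.le
    rwa [hTt, prod_range_natCast_sub_div_natCast_sub, coverWeight_empty, hsum, mul_one] at this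
  have heq : ∑ T ∈ powersetCard t univ, coverWeight A pE T =
      ∑ _T ∈ powersetCard t (univ : Finset M), c := by
    rw [sum_coverWeight_powersetCard hA, hsum, sum_const, card_powersetCard, card_univ, hv,
      nsmul_eq_mul, mul_one, mul_div_cancel₀ _ hvc.ne']
  have hcover : ∀ T ∈ powersetCard t univ, ∃ e, T ⊆ A e := fun T hT =>
    exists_subset_of_coverWeight_ne_zero (((sum_eq_sum_iff_of_le hle).1 heq T hT) ▸ hc.ne')
  have hcount := choose_le_card_mul_choose_of_forall_exists_subset hA hcover
  rw [hv] at hcount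
  rw [div_le_iff₀ hkc]
  exact_mod_cast hcount

/-- Massey–Schöbi bound: if an authentication code with k source states and v
messages is (t−1)-fold secure against spoofing (P_{d_i} = (k−i)/(v−i) for
0 ≤ i ≤ t−1), then the number b of encoding rules satisfies b ≥ C(v,t)/C(k,t). -/
theorem stmt8 {S M E : Type*} [Fintype S] [Fintype M] [Fintype E] [DecidableEq M]
    (k v t : ℕ) (hk : Fintype.card S = k) (hv : Fintype.card M = v)
    (ht : 1 ≤ t) (htk : t ≤ k) (hkv : k ≤ v)
    (enc : E → (S ↪ M)) (pE : E → ℝ)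
    (hpE : ∀ e, 0 ≤ pE e) (hsum : ∑ e, pE e = 1)
    (hsec : ∀ i < t, ∀ O : Finset M, O.card = i → ∀ m' ∉ O,
      (∑ e ∈ Finset.univ.filter
          (fun e => insert m' O ⊆ Finset.image (enc e) Finset.univ), pE e)
        ≤ ((k : ℝ) - i) / ((v : ℝ) - i) *
            (∑ e ∈ Finset.univ.filter
              (fun e => O ⊆ Finset.image (enc e) Finset.univ), pE e)) :
    ((v.choose t : ℝ) / (k.choose t : ℝ)) ≤ (Fintype.card E : ℝ) :=
  stmt8_general k v t hk hv htk hkv enc pE hsum hsec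
end

section
/- Suppose there is a t-(v,k,λ) design. Then there is an authentication code for k equiprobable source states, with v messages and λ·C(v,t)/C(k,t) encoding rules, that is (t−1)-fold secure against spoofing (i.e., P_{d_i} = (k−i)/(v−i) for 0 ≤ i ≤ t−1). -/
/-!
Let `λ_T` be the number of blocks containing `T`. Counting pairs (fresh point, block) gives
`(k - |O|) λ_O = ∑_{m ∉ O} λ_{O ∪ {m}}`, so by downward induction from `|T| = t` the number
`λ_T` depends only on `|T|` as long as `|T| ≤ t`. For `|O| < t` the sum then has `v - |O|`
equal terms, which is exactly the spoofing identity once each block is turned into one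
encoding rule with that block as its set of messages. Counting pairs (`t`-set, block) gives
`|B| C(k,t) = λ C(v,t)`.
-/

open Finset

section Design

variable {α : Type*} [DecidableEq α] (B : Finset (Finset α)) {k t lam : ℕ}

def blocksThrough (T : Finset α) : ℕ := #{b ∈ B | T ⊆ b}

theorem exists_embeddings_card_filter_eq_blocksThrough {S : Type*} [Fintype S]
    (hB : ∀ b ∈ B, #b = Fintype.card S) :
    ∃ E : Finset (S ↪ α), #E = #B ∧
      ∀ T : Finset α, #(E.filter fun e : S ↪ α => T ⊆ univ.image e) = blocksThrough B T := by
  classical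
  have hrange : ∀ b : B, ∃ e : S ↪ α, univ.image e = b := fun b =>
    ⟨(Fintype.equivOfCardEq (by rw [Fintype.card_coe, hB b b.2])).toEmbedding.trans
      (Function.Embedding.subtype (· ∈ (b : Finset α))),
      by rw [← coe_inj, coe_image, coe_univ, Set.image_univ, Function.Embedding.coe_trans,
        Set.range_comp, Equiv.coe_toEmbedding, Equiv.range_eq_univ]; simp⟩
  choose g hg using hrange
  have hinj : Function.Injective g := fun b b' h => Subtype.ext (by rw [← hg b, ← hg b', h])
  refine ⟨univ.image g, by rw [card_image_of_injective _ hinj, card_univ, Fintype.card_coe],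
    fun T => ?_⟩
  rw [filter_image, card_image_of_injective _ hinj]
  simp only [hg]
  rw [univ_eq_attach, filter_attach (T ⊆ ·), card_map, card_attach, blocksThrough]

variable [Fintype α]

theorem sum_blocksThrough_insert (hB : ∀ b ∈ B, #b = k) (O : Finset α) :
    ∑ m ∈ Oᶜ, blocksThrough B (insert m O) = (k - #O) * blocksThrough B O := by
  simp only [blocksThrough, card_filter]
  rw [sum_comm, mul_sum]
  refine sum_congr rfl fun b hb => ?_
  split_ifs with hOb
  · simp only [insert_subset_iff, hOb, and_true]
    rw [← card_filter, mul_one, ← hB b hb, ← card_sdiff_of_subset hOb]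
    congr 1
    ext m
    simp [and_comm]
  · refine sum_eq_zero fun m _ => if_neg fun h => hOb ((subset_insert m O).trans h)

theorem mul_blocksThrough_eq_of_forall_card_succ (hB : ∀ b ∈ B, #b = k) (O : Finset α) {c : ℕ}
    (hc : ∀ T : Finset α, #T = #O + 1 → blocksThrough B T = c) :
    (k - #O) * blocksThrough B O = (Fintype.card α - #O) * c := by
  rw [← sum_blocksThrough_insert B hB O,
    sum_congr rfl fun m hm => hc _ (card_insert_of_notMem (by simpa using hm)),
    sum_const, card_compl, smul_eq_mul]

theorem exists_blocksThrough_eq_of_card_le (htk : t ≤ k) (hB : ∀ b ∈ B, #b = k)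
    (hdesign : ∀ T : Finset α, #T = t → blocksThrough B T = lam) {s : ℕ} (hs : s ≤ t) :
    ∃ c, ∀ T : Finset α, #T = s → blocksThrough B T = c := by
  induction hs using Nat.decreasingInduction with
  | self => exact ⟨lam, hdesign⟩
  | of_succ s hst ih =>
    obtain ⟨c, hc⟩ := ih
    refine ⟨(Fintype.card α - s) * c / (k - s), fun T hT => ?_⟩
    have h := mul_blocksThrough_eq_of_forall_card_succ B hB T (c := c) (hT ▸ hc)
    rw [hT] at h
    rw [← h, Nat.mul_div_cancel_left _ (by omega)]

theorem blocksThrough_insert_mul (htk : t ≤ k) (hB : ∀ b ∈ B, #b = k)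
    (hdesign : ∀ T : Finset α, #T = t → blocksThrough B T = lam) {O : Finset α} (hO : #O < t)
    {m : α} (hm : m ∉ O) :
    blocksThrough B (insert m O) * (Fintype.card α - #O) = (k - #O) * blocksThrough B O := by
  obtain ⟨c, hc⟩ := exists_blocksThrough_eq_of_card_le B htk hB hdesign (s := #O + 1) hO
  rw [mul_blocksThrough_eq_of_forall_card_succ B hB O hc, hc _ (card_insert_of_notMem hm),
    mul_comm]

theorem card_mul_choose_eq (hB : ∀ b ∈ B, #b = k)
    (hdesign : ∀ T : Finset α, #T = t → blocksThrough B T = lam) :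
    #B * k.choose t = lam * (Fintype.card α).choose t := by
  rw [card_mul_eq_card_mul (t := powersetCard t univ) (fun b T => T ⊆ b) ?_ ?_,
    card_powersetCard, card_univ, mul_comm]
  · intro b hb
    rw [← hB b hb, ← card_powersetCard]
    congr 1
    ext T
    simp [bipartiteAbove, mem_powersetCard, and_comm]
  · intro T hT
    exact hdesign T (mem_powersetCard.1 hT).2

end Design

theorem stmt9_general {S M : Type*} [Fintype S] [Fintype M] [DecidableEq M]
    (k v t lam : ℕ) (hk : Fintype.card S = k) (hv : Fintype.card M = v)
    (htk : t ≤ k)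
    (B : Finset (Finset M)) (hblocks : ∀ b ∈ B, b.card = k)
    (hdesign : ∀ T : Finset M, T.card = t → (B.filter (fun b => T ⊆ b)).card = lam) :
    ∃ E : Finset (S ↪ M),
      E.card = lam * v.choose t / k.choose t ∧
      ∀ i < t, ∀ O : Finset M, O.card = i → ∀ m' ∉ O,
        (E.filter (fun e : S ↪ M => insert m' O ⊆ Finset.image e Finset.univ)).card * (v - i)
          = (k - i) * (E.filter (fun e : S ↪ M => O ⊆ Finset.image e Finset.univ)).card := by
  subst hk hv
  obtain ⟨E, hEcard, hEB⟩ := exists_embeddings_card_filter_eq_blocksThrough B hblocks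
  refine ⟨E, ?_, fun i hi O hO m' hm' => ?_⟩
  · rw [hEcard, ← card_mul_choose_eq B hblocks hdesign, Nat.mul_div_cancel _ (Nat.choose_pos htk)]
  · subst hO
    rw [hEB, hEB]
    exact blocksThrough_insert_mul B htk hblocks hdesign hi hm'

/-- From a t-(v,k,λ) design one obtains an authentication code for k equiprobable
source states with v messages and λ·C(v,t)/C(k,t) equiprobable encoding rules that
is (t−1)-fold secure against spoofing: for 0 ≤ i ≤ t−1 every observed i-set O and
fresh message m' satisfy P_{d_i} = (k−i)/(v−i). -/
theorem stmt9 {S M : Type*} [Fintype S] [Fintype M] [DecidableEq M] [DecidableEq S]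
    (k v t lam : ℕ) (hk : Fintype.card S = k) (hv : Fintype.card M = v)
    (ht : 1 ≤ t) (htk : t ≤ k) (hkv : k ≤ v) (hlam : 0 < lam)
    (B : Finset (Finset M)) (hblocks : ∀ b ∈ B, b.card = k)
    (hdesign : ∀ T : Finset M, T.card = t → (B.filter (fun b => T ⊆ b)).card = lam) :
    ∃ E : Finset (S ↪ M),
      E.card = lam * v.choose t / k.choose t ∧
      ∀ i < t, ∀ O : Finset M, O.card = i → ∀ m' ∉ O,
        (E.filter (fun e : S ↪ M => insert m' O ⊆ Finset.image e Finset.univ)).card * (v - i)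
          = (k - i) * (E.filter (fun e : S ↪ M => O ⊆ Finset.image e Finset.univ)).card :=
  stmt9_general k v t lam hk hv htk B hblocks hdesign
end

section
/- If there is an authentication code for k equiprobable source states, with v messages and exactly C(v,t)/C(k,t) encoding rules, that is (t−1)-fold secure against spoofing, then the sets of valid messages M(e), for e ranging over encoding rules, form the blocks of a Steiner t-(v,k,1) design on the message set. -/
/-!
Write `f O` for the probability that every message of `O` is valid, so `f ∅ = 1`. Security says
that adding a message to a set of `i < t` messages multiplies `f` by `(k - i)/(v - i) > 0`, so
`f T > 0` and hence every `t`-set `T` lies in some block `M(e)`. Each block contains `C(k, t)`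
of the `t`-sets, so there are `|E| C(k, t) = C(v, t)` incidences between blocks and the `C(v, t)`
`t`-sets; as each `t`-set has at least one, it has exactly one.
-/

open Finset

theorem Finset.eq_prod_range_card_of_insert_eq_mul {α R : Type*} [DecidableEq α] [CommMonoid R]
    (f : Finset α → R) (r : ℕ → R) {t : ℕ} (h_empty : f ∅ = 1)
    (h_insert : ∀ O : Finset α, #O < t → ∀ a ∉ O, f (insert a O) = r #O * f O) :
    ∀ O : Finset α, #O ≤ t → f O = ∏ j ∈ range #O, r j := by
  intro O
  induction O using Finset.induction_on with
  | empty => simpa using h_empty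
  | insert a O ha ih =>
    intro hO
    rw [card_insert_of_notMem ha] at hO ⊢
    rw [h_insert O (by omega) a ha, ih (by omega), prod_range_succ, mul_comm]

theorem Finset.sum_card_filter_subset_eq_sum_choose {α ι : Type*} [Fintype α] [DecidableEq α]
    [Fintype ι] (B : ι → Finset α) (t : ℕ) :
    ∑ T ∈ univ.powersetCard t, #{i | T ⊆ B i} = ∑ i, (#(B i)).choose t := by
  refine (sum_card_bipartiteAbove_eq_sum_card_bipartiteBelow (fun T i => T ⊆ B i)
    (s := univ.powersetCard t) (t := univ)).trans (sum_congr rfl fun i _ => ?_)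
  rw [← card_powersetCard]
  congr 1
  ext T
  simp [bipartiteBelow, mem_powersetCard, and_comm]

theorem Finset.existsUnique_subset_of_forall_exists_subset {α ι : Type*} [Fintype α]
    [DecidableEq α] [Fintype ι] (B : ι → Finset α) {k t : ℕ} (hB : ∀ i, #(B i) = k)
    (hcover : ∀ T : Finset α, #T = t → ∃ i, T ⊆ B i)
    (hcount : Fintype.card ι * k.choose t = (Fintype.card α).choose t)
    (T : Finset α) (hT : #T = t) : ∃! i, T ⊆ B i := by
  have hpos : ∀ T ∈ univ.powersetCard t, 1 ≤ #{i | T ⊆ B i} := fun T hT => by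
    obtain ⟨i, hi⟩ := hcover T (mem_powersetCard.1 hT).2
    exact card_pos.2 ⟨i, by simp [hi]⟩
  have htotal : ∑ T ∈ (univ : Finset α).powersetCard t, 1 =
      ∑ T ∈ univ.powersetCard t, #{i | T ⊆ B i} := by
    simp [sum_card_filter_subset_eq_sum_choose, hB, hcount]
  rw [Fintype.existsUnique_iff_card_one]
  exact ((sum_eq_sum_iff_of_le hpos).1 htotal T (mem_powersetCard.2 ⟨subset_univ T, hT⟩)).symm

theorem stmt10_general {S M E : Type*} [Fintype S] [Fintype M] [Fintype E] [DecidableEq M]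
    (k v t : ℕ) (hk : Fintype.card S = k) (hv : Fintype.card M = v)
    (htk : t ≤ k) (hkv : k ≤ v)
    (enc : E → (S ↪ M)) (pE : E → ℝ)
    (hsum : ∑ e, pE e = 1)
    (hcard : Fintype.card E * k.choose t = v.choose t)
    (hsec : ∀ i < t, ∀ O : Finset M, O.card = i → ∀ m' ∉ O,
      (∑ e ∈ Finset.univ.filter
          (fun e => insert m' O ⊆ Finset.image (enc e) Finset.univ), pE e)
        = ((k : ℝ) - i) / ((v : ℝ) - i) *
            (∑ e ∈ Finset.univ.filter
              (fun e => O ⊆ Finset.image (enc e) Finset.univ), pE e)) :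
    ∀ T : Finset M, T.card = t → ∃! e : E, T ⊆ Finset.image (enc e) Finset.univ := by
  set B : E → Finset M := fun e => univ.image (enc e)
  set f : Finset M → ℝ := fun O => ∑ e ∈ univ.filter (fun e => O ⊆ B e), pE e
  have hf : ∀ O : Finset M, #O ≤ t → f O = ∏ j ∈ range #O, ((k : ℝ) - j) / ((v : ℝ) - j) :=
    eq_prod_range_card_of_insert_eq_mul f _ (by simpa [f] using hsum)
      fun O hO m hm => hsec _ hO O rfl m hm
  have hpos : 0 < ∏ j ∈ range t, ((k : ℝ) - j) / ((v : ℝ) - j) := by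
    refine prod_pos fun j hj => div_pos ?_ ?_ <;>
    · have := mem_range.1 hj
      rw [sub_pos, Nat.cast_lt]
      omega
  have hcover : ∀ T : Finset M, #T = t → ∃ e, T ⊆ B e := fun T hT => by
    have hfT : f T ≠ 0 := by
      rw [hf T hT.le, hT]
      exact hpos.ne'
    obtain ⟨e, he⟩ := nonempty_of_sum_ne_zero hfT
    exact ⟨e, (mem_filter.1 he).2⟩
  have hB : ∀ e, #(B e) = k := fun e => by
    simp [B, card_image_of_injective _ (enc e).injective, hk]
  exact existsUnique_subset_of_forall_exists_subset B hB hcover (by rwa [hv])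

/-- Converse: an authentication code for k equiprobable source states with v
messages and exactly C(v,t)/C(k,t) encoding rules that is (t−1)-fold secure
against spoofing gives rise to a Steiner t-(v,k,1) design: every t-set of
messages lies in the valid-message set M(e) of exactly one encoding rule. -/
theorem stmt10 {S M E : Type*} [Fintype S] [Fintype M] [Fintype E] [DecidableEq M]
    (k v t : ℕ) (hk : Fintype.card S = k) (hv : Fintype.card M = v)
    (ht : 1 ≤ t) (htk : t ≤ k) (hkv : k ≤ v)
    (enc : E → (S ↪ M)) (pE : E → ℝ)
    (hpE : ∀ e, 0 ≤ pE e) (hsum : ∑ e, pE e = 1)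
    (hcard : Fintype.card E * k.choose t = v.choose t)
    (hsec : ∀ i < t, ∀ O : Finset M, O.card = i → ∀ m' ∉ O,
      (∑ e ∈ Finset.univ.filter
          (fun e => insert m' O ⊆ Finset.image (enc e) Finset.univ), pE e)
        = ((k : ℝ) - i) / ((v : ℝ) - i) *
            (∑ e ∈ Finset.univ.filter
              (fun e => O ⊆ Finset.image (enc e) Finset.univ), pE e)) :
    ∀ T : Finset M, T.card = t → ∃! e : E, T ⊆ Finset.image (enc e) Finset.univ :=
  stmt10_general k v t hk hv htk hkv enc pE hsum hcard hsec
end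

section
/- An authentication code with equiprobable encoding rules and equiprobable source states has perfect secrecy if and only if each message occurs with the same frequency in each column of the encoding matrix; i.e., for every message m and every pair of source states s, s', the number of encoding rules e with e(s) = m equals the number with e(s') = m. -/
/-!
Because every encoding rule is injective, the rules under which `m` is a valid message are
partitioned according to the source state they encode as `m`. Hence, with
`N(s, m) = #{e | e(s) = m}`, the denominator of `p_S(s | m)` is proportional to `∑ₜ N(t, m)`,
and `p_S(s | m) = N(s, m) / ∑ₜ N(t, m)`. This share equals `1 / |S|` for every `s` exactly when
`N(·, m)` is constant.
-/

open Finset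

theorem card_filter_mem_image_eq_sum_card_filter {S M E : Type*} [Fintype S] [Fintype E]
    [DecidableEq M] (enc : E → S ↪ M) (m : M) :
    #{e | m ∈ image (enc e) univ} = ∑ s, #{e | enc e s = m} := by
  classical
  have hunion : ({e | m ∈ image (enc e) univ} : Finset E) =
      univ.biUnion fun s => ({e | enc e s = m} : Finset E) := by
    ext e
    simp
  rw [hunion, card_biUnion]
  intro s _ s' _ hss'
  simp only [disjoint_left, mem_filter, mem_univ, true_and]
  intro e hs hs'
  exact hss' ((enc e).injective (hs.trans hs'.symm))

theorem forall_div_sum_eq_one_div_card_iff {ι : Type*} [Fintype ι] (N : ι → ℕ) :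
    (∀ i, 0 < ((∑ j, N j : ℕ) : ℝ) → (N i : ℝ) / (∑ j, N j : ℕ) = 1 / Fintype.card ι) ↔
      ∀ i j, N i = N j := by
  constructor
  · intro h i j
    by_cases hsum : ∑ k, N k = 0
    · rw [sum_eq_zero_iff] at hsum
      rw [hsum i (mem_univ i), hsum j (mem_univ j)]
    · have hpos : 0 < ((∑ k, N k : ℕ) : ℝ) := by positivity
      have hij := (h i hpos).trans (h j hpos).symm
      exact_mod_cast (div_left_inj' hpos.ne').mp hij
  · intro h i hpos
    have hsum : ∑ j, N j = Fintype.card ι * N i := by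
      simp [fun j => h j i]
    rw [hsum] at hpos ⊢
    have hNi : (N i : ℝ) ≠ 0 := by
      intro h0
      simp [h0] at hpos
    push_cast
    field_simp

theorem stmt11_general {S M E : Type*} [Fintype S] [Fintype E]
    [DecidableEq M] [Nonempty S] [Nonempty E]
    (enc : E → (S ↪ M)) :
    (∀ (s : S) (m : M),
      0 < (∑ e ∈ Finset.univ.filter
            (fun e => m ∈ Finset.image (enc e) Finset.univ),
          (1 / (Fintype.card E : ℝ)) * (1 / (Fintype.card S : ℝ))) →
      (∑ e ∈ Finset.univ.filter (fun e => enc e s = m),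
          (1 / (Fintype.card E : ℝ)) * (1 / (Fintype.card S : ℝ))) /
        (∑ e ∈ Finset.univ.filter
            (fun e => m ∈ Finset.image (enc e) Finset.univ),
          (1 / (Fintype.card E : ℝ)) * (1 / (Fintype.card S : ℝ)))
        = 1 / (Fintype.card S : ℝ))
    ↔ (∀ (m : M) (s s' : S),
        (Finset.univ.filter (fun e : E => enc e s = m)).card
          = (Finset.univ.filter (fun e : E => enc e s' = m)).card) := by
  have hc : 0 < (1 / (Fintype.card E : ℝ)) * (1 / (Fintype.card S : ℝ)) := by positivity
  simp only [sum_const, nsmul_eq_mul, mul_div_mul_right _ _ hc.ne',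
    mul_pos_iff_of_pos_right hc, card_filter_mem_image_eq_sum_card_filter enc]
  rw [forall_comm]
  exact forall_congr' fun m => forall_div_sum_eq_one_div_card_iff fun s => #{e | enc e s = m}

/-- For equiprobable encoding rules and equiprobable source states, perfect secrecy
(p_S(s|m) = p_S(s) for every s and every message m with p_M(m) > 0, where
p_S(s|m) = (Σ_{e:e(s)=m} p_E(e)p_S(s)) / (Σ_{e:m∈M(e)} p_E(e)p_S(e⁻¹(m)))) holds if
and only if each message occurs with the same frequency in each column of the
encoding matrix. -/
theorem stmt11 {S M E : Type*} [Fintype S] [Fintype M] [Fintype E]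
    [DecidableEq M] [DecidableEq S] [Nonempty S] [Nonempty E]
    (enc : E → (S ↪ M)) :
    (∀ (s : S) (m : M),
      0 < (∑ e ∈ Finset.univ.filter
            (fun e => m ∈ Finset.image (enc e) Finset.univ),
          (1 / (Fintype.card E : ℝ)) * (1 / (Fintype.card S : ℝ))) →
      (∑ e ∈ Finset.univ.filter (fun e => enc e s = m),
          (1 / (Fintype.card E : ℝ)) * (1 / (Fintype.card S : ℝ))) /
        (∑ e ∈ Finset.univ.filter
            (fun e => m ∈ Finset.image (enc e) Finset.univ),
          (1 / (Fintype.card E : ℝ)) * (1 / (Fintype.card S : ℝ)))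
        = 1 / (Fintype.card S : ℝ))
    ↔ (∀ (m : M) (s s' : S),
        (Finset.univ.filter (fun e : E => enc e s = m)).card
          = (Finset.univ.filter (fun e : E => enc e s' = m)).card) :=
  stmt11_general enc
end

section
/- Let D = (X,B) be a Steiner t-(v,k,1) design in which v divides the number of blocks b. Then each block of D can be linearly ordered (i.e., there is a bijection from {1,…,k} to each block) so that every point x ∈ X occurs in each position j ∈ {1,…,k} in exactly b/v of the ordered blocks. -/
/-!
Counting the pairs `(T, b)` with `x ∈ T ⊆ b` and `#T = t` shows that every point lies in the same
number `r` of blocks, and double counting incidences gives `v * r = b * k`, so `r = k * (b / v)`.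

It remains to order the sets of a family of `k`-sets in which every point lies in `k * m` sets,
where there are `v * m` sets. Splitting every point into `m` copies, Hall's condition holds, so
some choice of one point per set hits every point at most `m` times, hence exactly `m` times.
Putting the chosen points first and recursing on the remaining `(k - 1)`-sets gives the
ordering; this is König's edge-colouring theorem for the point-block incidence multigraph.
-/
open Finset

section Steiner

variable {α : Type*} [DecidableEq α] {X : Finset α} {B : Finset (Finset α)} {k t : ℕ}

lemma card_filter_mem_powersetCard {s : Finset α} {x : α} (hx : x ∈ s) (ht : 1 ≤ t) :
    #{T ∈ s.powersetCard t | x ∈ T} = (#s - 1).choose (t - 1) := by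
  simpa using card_filter_powersetCard_subset {x} s t (by simpa) (by simpa)

lemma card_filter_mem_mul_choose (ht : 1 ≤ t) (hblocks : ∀ b ∈ B, b ⊆ X ∧ #b = k)
    (hdesign : ∀ T ⊆ X, #T = t → #{b ∈ B | T ⊆ b} = 1) {x : α} (hx : x ∈ X) :
    #{b ∈ B | x ∈ b} * (k - 1).choose (t - 1) = (#X - 1).choose (t - 1) := by
  rw [← card_filter_mem_powersetCard hx ht, ← mul_one #(filter _ (powersetCard t X))]
  refine card_mul_eq_card_mul (fun b T => T ⊆ b) (fun b hb => ?_) (fun T hT => ?_)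
  · obtain ⟨hbB, hxb⟩ := mem_filter.1 hb
    rw [← (hblocks b hbB).2, ← card_filter_mem_powersetCard hxb ht]
    congr 1
    ext T
    simp only [bipartiteAbove, mem_filter, mem_powersetCard]
    exact ⟨fun ⟨⟨⟨_, hT⟩, hxT⟩, hTb⟩ => ⟨⟨hTb, hT⟩, hxT⟩,
      fun ⟨⟨hTb, hT⟩, hxT⟩ => ⟨⟨⟨hTb.trans (hblocks b hbB).1, hT⟩, hxT⟩, hTb⟩⟩
  · obtain ⟨⟨hTX, hT⟩, hxT⟩ := by simpa only [mem_filter, mem_powersetCard] using hT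
    rw [← hdesign T hTX hT, bipartiteBelow, filter_filter]
    congr 1
    ext b
    simp only [mem_filter]
    exact ⟨fun ⟨hbB, _, hTb⟩ => ⟨hbB, hTb⟩, fun ⟨hbB, hTb⟩ => ⟨hbB, hTb hxT, hTb⟩⟩

lemma card_mul_card_filter_mem (ht : 1 ≤ t) (htk : t ≤ k)
    (hblocks : ∀ b ∈ B, b ⊆ X ∧ #b = k)
    (hdesign : ∀ T ⊆ X, #T = t → #{b ∈ B | T ⊆ b} = 1) {x : α} (hx : x ∈ X) :
    #X * #{b ∈ B | x ∈ b} = #B * k := by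
  have hchoose : 0 < (k - 1).choose (t - 1) := Nat.choose_pos (by omega)
  refine card_mul_eq_card_mul (fun y b => y ∈ b) (fun y hy => ?_) (fun b hb => ?_)
  · exact Nat.eq_of_mul_eq_mul_right hchoose <|
      (card_filter_mem_mul_choose ht hblocks hdesign hy).trans
        (card_filter_mem_mul_choose ht hblocks hdesign hx).symm
  · rw [bipartiteBelow, filter_mem_eq_inter, inter_eq_right.2 (hblocks b hb).1, (hblocks b hb).2]

end Steiner

section Ordering

variable {α ι : Type*} [DecidableEq α] [Fintype ι] {X : Finset α} {S : ι → Finset α} {m n : ℕ}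

lemma card_le_card_biUnion_mul (hSX : ∀ i, S i ⊆ X) (hS : ∀ i, #(S i) = n + 1)
    (hdeg : ∀ x ∈ X, #{i | x ∈ S i} = (n + 1) * m) (A : Finset ι) :
    #A ≤ #(A.biUnion S) * m := by
  have hcount : #A * (n + 1) ≤ #(A.biUnion S) * ((n + 1) * m) := by
    refine card_mul_le_card_mul (fun i x => x ∈ S i) (fun i hi => ?_) (fun x hx => ?_)
    · rw [bipartiteAbove, filter_mem_eq_inter, inter_eq_right.2 (subset_biUnion_of_mem S hi), hS]
    · obtain ⟨i, -, hxi⟩ := mem_biUnion.1 hx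
      exact (hdeg x (hSX i hxi)).symm ▸ card_le_card (filter_subset_filter _ (subset_univ A))
  rw [mul_comm (n + 1) m, ← mul_assoc] at hcount
  exact Nat.le_of_mul_le_mul_right hcount n.add_one_pos

lemma exists_equitable_choice (hSX : ∀ i, S i ⊆ X) (hS : ∀ i, #(S i) = n + 1)
    (hdeg : ∀ x ∈ X, #{i | x ∈ S i} = (n + 1) * m) :
    ∃ c : ι → α, (∀ i, c i ∈ S i) ∧ ∀ x ∈ X, #{i | c i = x} = m := by
  obtain ⟨c, hc_inj, hc_mem⟩ :=
    (all_card_le_biUnion_card_iff_exists_injective fun i => S i ×ˢ (univ : Finset (Fin m))).1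
      fun A => by
        have hbiUnion :
            A.biUnion (fun i => S i ×ˢ univ) = A.biUnion S ×ˢ (univ : Finset (Fin m)) := by
          ext; simp
        rw [hbiUnion, card_product, card_univ, Fintype.card_fin]
        exact card_le_card_biUnion_mul hSX hS hdeg A
  have hmem (i : ι) : (c i).1 ∈ S i := (mem_product.1 (hc_mem i)).1
  have hfiber_le (x : α) : #{i | (c i).1 = x} ≤ m := by
    simpa using card_le_card_of_injOn (fun i => (c i).2) (fun _ _ => mem_univ _)
      fun i hi j hj hij =>
        hc_inj (Prod.ext ((mem_filter.1 hi).2.trans (mem_filter.1 hj).2.symm) hij)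
  have hcard : #(univ : Finset ι) * (n + 1) = #X * ((n + 1) * m) :=
    card_mul_eq_card_mul (fun i x => x ∈ S i)
      (fun i _ => by rw [bipartiteAbove, filter_mem_eq_inter, inter_eq_right.2 (hSX i), hS])
      (fun x hx => hdeg x hx)
  have hfiber_sum : ∑ x ∈ X, #{i | (c i).1 = x} = ∑ _x ∈ X, m := by
    rw [← card_eq_sum_card_fiberwise fun i _ => hSX i (hmem i), sum_const, smul_eq_mul]
    exact Nat.eq_of_mul_eq_mul_right n.add_one_pos (by rw [hcard]; ring)
  exact ⟨fun i => (c i).1, hmem, (sum_eq_sum_iff_of_le fun x _ => hfiber_le x).1 hfiber_sum⟩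

theorem exists_equitable_ordering (hSX : ∀ i, S i ⊆ X) (hS : ∀ i, #(S i) = n)
    (hdeg : ∀ x ∈ X, #{i | x ∈ S i} = n * m) :
    ∃ f : ι → Fin n → α, (∀ i, image (f i) univ = S i) ∧
      ∀ x ∈ X, ∀ j, #{i | f i j = x} = m := by
  induction n generalizing S with
  | zero =>
    exact ⟨fun _ => Fin.elim0, fun i => by simp [card_eq_zero.1 (hS i)], fun _ _ j => j.elim0⟩
  | succ n ih =>
    obtain ⟨c, hc_mem, hc_fiber⟩ := exists_equitable_choice hSX hS hdeg
    have hdeg' (x : α) (hx : x ∈ X) : #{i | x ∈ (S i).erase (c i)} = n * m := by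
      classical
      have hsplit : ({i | x ∈ (S i).erase (c i)} : Finset ι) =
          ({i | x ∈ S i} : Finset ι) \ ({i | c i = x} : Finset ι) := by
        ext i
        simp only [mem_filter, mem_sdiff, mem_erase, mem_univ, true_and]
        tauto
      have hsub : ({i | c i = x} : Finset ι) ⊆ ({i | x ∈ S i} : Finset ι) :=
        monotone_filter_right _ fun i _ hcx => hcx ▸ hc_mem i
      rw [hsplit, card_sdiff_of_subset hsub, hdeg x hx, hc_fiber x hx, Nat.succ_mul,
        Nat.add_sub_cancel]
    obtain ⟨f, hf_image, hf_fiber⟩ := ih (fun i => (erase_subset _ _).trans (hSX i))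
      (fun i => by rw [card_erase_of_mem (hc_mem i), hS]; rfl) hdeg'
    refine ⟨fun i => Fin.cons (c i) (f i), fun i => ?_, fun x hx j => ?_⟩
    · have := congrArg ((↑) : Finset α → Set α) (hf_image i)
      rw [coe_image, coe_univ, Set.image_univ] at this
      rw [← coe_inj, coe_image, coe_univ, Set.image_univ, Fin.range_cons, this, coe_erase,
        Set.insert_sdiff_singleton, Set.insert_eq_of_mem (hc_mem i)]
    · cases j using Fin.cases with
      | zero => simpa using hc_fiber x hx
      | succ j => simpa using hf_fiber x hx j

end Ordering

theorem stmt12_general {α : Type*} [DecidableEq α] (X : Finset α) (B : Finset (Finset α))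
    (v k t : ℕ) (ht : 1 ≤ t) (htk : t ≤ k)
    (hX : X.card = v)
    (hblocks : ∀ b ∈ B, b ⊆ X ∧ b.card = k)
    (hdesign : ∀ T : Finset α, T ⊆ X → T.card = t →
      (B.filter (fun b => T ⊆ b)).card = 1)
    (hdvd : v ∣ B.card) :
    ∃ f : {b // b ∈ B} → Fin k → α,
      (∀ b, Finset.image (f b) Finset.univ = b.1) ∧
      ∀ x ∈ X, ∀ j : Fin k,
        (Finset.univ.filter (fun b : {b // b ∈ B} => f b j = x)).card
          = B.card / v := by
  obtain ⟨m, hm⟩ := hdvd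
  have hv {x : α} (hx : x ∈ X) : 0 < v := hX ▸ card_pos.2 ⟨x, hx⟩
  have hdeg (x : α) (hx : x ∈ X) : #{b : B | x ∈ b.1} = k * m := by
    have hrep := card_mul_card_filter_mem ht htk hblocks hdesign hx
    rw [hX, hm, mul_assoc, mul_comm m] at hrep
    rw [univ_eq_attach, filter_attach (x ∈ ·), card_map, card_attach]
    exact Nat.eq_of_mul_eq_mul_left (hv hx) hrep
  obtain ⟨f, hf_image, hf_fiber⟩ := exists_equitable_ordering
    (fun b : B => (hblocks b.1 b.2).1) (fun b => (hblocks b.1 b.2).2) hdeg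
  refine ⟨f, hf_image, fun x hx j => ?_⟩
  rw [hf_fiber x hx j, hm, Nat.mul_div_cancel_left m (hv hx)]

/-- In a Steiner t-(v,k,1) design in which v divides the number of blocks b, the
blocks can be linearly ordered so that every point occurs in each of the k
positions in exactly b/v of the ordered blocks. -/
theorem stmt12 {α : Type*} [DecidableEq α] (X : Finset α) (B : Finset (Finset α))
    (v k t : ℕ) (ht : 1 ≤ t) (htk : t ≤ k) (hkv : k ≤ v)
    (hX : X.card = v)
    (hblocks : ∀ b ∈ B, b ⊆ X ∧ b.card = k)
    (hdesign : ∀ T : Finset α, T ⊆ X → T.card = t →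
      (B.filter (fun b => T ⊆ b)).card = 1)
    (hdvd : v ∣ B.card) :
    ∃ f : {b // b ∈ B} → Fin k → α,
      (∀ b, Finset.image (f b) Finset.univ = b.1) ∧
      ∀ x ∈ X, ∀ j : Fin k,
        (Finset.univ.filter (fun b : {b // b ∈ B} => f b j = x)).card
          = B.card / v :=
  stmt12_general X B v k t ht htk hX hblocks hdesign hdvd
end

section
/- Suppose there is a Steiner t-(v,k,1) design with v dividing b = C(v,t)/C(k,t). Then there is an optimal authentication code for k equiprobable source states, with v messages and C(v,t)/C(k,t) encoding rules (used equiprobably), that is (t−1)-fold secure against spoofing and provides perfect secrecy. -/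
/-!
Double counting the `t`-sets lying between a set `O` with `#O = i ≤ t` and a block shows that
the number of blocks containing `O` is `C(v-i, t-i) / C(k-i, t-i)`. For `O = ∅` this is
`b = C(v,t) / C(k,t)`, and the ratio of these numbers for `insert m O` and `O` is `(k-i)/(v-i)`,
the spoofing probability. Every point lies in `r = bk/v` blocks, a multiple of `k` since `v ∣ b`.
Perfect secrecy asks for an ordering of every block in which each point occupies each position
exactly `r/k` times; such orderings are built one position at a time, each position being filled
by a matching, given by Hall's theorem, of the blocks into `r/k` copies of every point.
-/

open Finset Fintype

structure IsSteinerSystem {M : Type*} [DecidableEq M] (t k : ℕ) (B : Finset (Finset M)) : Prop where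
  card_eq : ∀ b ∈ B, #b = k
  card_filter_superset_eq_one : ∀ T : Finset M, #T = t → #{b ∈ B | T ⊆ b} = 1

lemma Nat.mul_choose_sub_one_eq (n : ℕ) {r : ℕ} (hr : 0 < r) :
    n * (n - 1).choose (r - 1) = n.choose r * r := by
  obtain _ | n := n
  · simp [Nat.choose_eq_zero_of_lt hr]
  obtain _ | r := r
  · omega
  exact Nat.add_one_mul_choose_eq n r

namespace IsSteinerSystem

variable {M : Type*} [Fintype M] [DecidableEq M] {t k : ℕ} {B : Finset (Finset M)}

theorem card_filter_superset_mul_choose (hB : IsSteinerSystem t k B) {O : Finset M}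
    (hO : #O ≤ t) :
    #{b ∈ B | O ⊆ b} * (k - #O).choose (t - #O) = (card M - #O).choose (t - #O) := by
  have hcount := card_mul_eq_card_mul (fun T b => T ⊆ b)
    (s := {T ∈ univ.powersetCard t | O ⊆ T}) (t := {b ∈ B | O ⊆ b})
    (m := 1) (n := (k - #O).choose (t - #O)) ?_ ?_
  · rwa [card_filter_powersetCard_subset O univ t (subset_univ O) hO, card_univ, mul_one,
      eq_comm] at hcount
  · intro T hT
    obtain ⟨hT, hOT⟩ := mem_filter.mp hT
    rw [bipartiteAbove, filter_filter,
      ← hB.card_filter_superset_eq_one T (mem_powersetCard.mp hT).2]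
    congr 1
    exact filter_congr fun b _ => ⟨And.right, fun hTb => ⟨hOT.trans hTb, hTb⟩⟩
  · intro b hb
    obtain ⟨hb, hOb⟩ := mem_filter.mp hb
    rw [← hB.card_eq b hb, ← card_filter_powersetCard_subset O b t hOb hO, bipartiteBelow,
      filter_filter]
    congr 1
    ext T
    simp only [mem_filter, mem_powersetCard, subset_univ, true_and]
    tauto

theorem card_mul_choose (hB : IsSteinerSystem t k B) : #B * k.choose t = (card M).choose t := by
  simpa using hB.card_filter_superset_mul_choose (O := ∅) (Nat.zero_le t)

theorem card_mul_card_filter_mem (hB : IsSteinerSystem t k B) (ht : 1 ≤ t) (htk : t ≤ k)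
    (m : M) : card M * #{b ∈ B | m ∈ b} = #B * k := by
  have hrep (m' : M) : #{b ∈ B | m' ∈ b} = #{b ∈ B | m ∈ b} := by
    have hpos : 0 < (k - 1).choose (t - 1) := Nat.choose_pos (by omega)
    have h₁ := hB.card_filter_superset_mul_choose (O := {m'}) (by simpa using ht)
    have h₂ := hB.card_filter_superset_mul_choose (O := {m}) (by simpa using ht)
    simp only [card_singleton, singleton_subset_iff] at h₁ h₂
    exact Nat.eq_of_mul_eq_mul_right hpos (h₁.trans h₂.symm)
  simpa using card_mul_eq_card_mul (fun m b => m ∈ b) (s := univ) (t := B)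
    (fun m' _ => hrep m') (fun b hb => by simpa [bipartiteBelow] using hB.card_eq b hb)

theorem card_filter_insert_superset_mul (hB : IsSteinerSystem t k B) (htk : t ≤ k)
    {O : Finset M} (hO : #O < t) {m : M} (hm : m ∉ O) :
    #{b ∈ B | insert m O ⊆ b} * (card M - #O) = (k - #O) * #{b ∈ B | O ⊆ b} := by
  set i := #O
  have h0 := hB.card_filter_superset_mul_choose hO.le
  have h1 := hB.card_filter_superset_mul_choose (O := insert m O)
    (by rw [card_insert_of_notMem hm]; omega)
  rw [card_insert_of_notMem hm, ← Nat.sub_sub, ← Nat.sub_sub, ← Nat.sub_sub] at h1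
  set N₀ := #{b ∈ B | O ⊆ b}
  set N₁ := #{b ∈ B | insert m O ⊆ b}
  set x := (k - i).choose (t - i)
  set y := (k - i - 1).choose (t - i - 1)
  have hxy : 0 < x * y := Nat.mul_pos (Nat.choose_pos (by omega)) (Nat.choose_pos (by omega))
  have hk : (k - i) * y = x * (t - i) := Nat.mul_choose_sub_one_eq _ (by omega)
  have hv := Nat.mul_choose_sub_one_eq (card M - i) (r := t - i) (by omega)
  apply Nat.eq_of_mul_eq_mul_right hxy
  calc N₁ * (card M - i) * (x * y)
      = (N₁ * y) * (card M - i) * x := by ring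
    _ = (card M - i).choose (t - i) * (t - i) * x := by rw [h1, mul_comm _ (card M - i), hv]
    _ = (N₀ * x) * ((k - i) * y) := by rw [← h0, hk]; ring
    _ = (k - i) * N₀ * (x * y) := by ring

end IsSteinerSystem

section BalancedOrdering

variable {ι M : Type*} [Fintype ι] [Fintype M] [DecidableEq M]

theorem exists_choice_card_fiber_eq {c j : ℕ} (hj : 0 < j) (g : ι → Finset M)
    (hg : ∀ i, #(g i) = j) (hreg : ∀ m, #{i | m ∈ g i} = c * j) :
    ∃ f : ι → M, (∀ i, f i ∈ g i) ∧ ∀ m, #{i | f i = m} = c := by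
  classical
  -- Hall's condition for matching `ι` into `c` copies of each point
  have hall (A : Finset ι) : #A ≤ #(A.biUnion fun i => g i ×ˢ (univ : Finset (Fin c))) := by
    have hA : #A * j ≤ #(A.biUnion g) * (c * j) :=
      card_mul_le_card_mul (fun i m => m ∈ g i)
        (fun i hi => (hg i).symm.le.trans (card_le_card fun m hm => by
          simpa [bipartiteAbove] using ⟨⟨i, hi, hm⟩, hm⟩))
        (fun m _ => (hreg m).symm ▸ card_le_card (filter_subset_filter _ (subset_univ A)))
    have hprod : A.biUnion (fun i => g i ×ˢ (univ : Finset (Fin c))) = A.biUnion g ×ˢ univ := by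
      ext; simp
    rw [hprod, card_product, card_univ, Fintype.card_fin]
    exact Nat.le_of_mul_le_mul_right (by linarith) hj
  obtain ⟨F, hFinj, hFmem⟩ := (all_card_le_biUnion_card_iff_exists_injective _).mp hall
  have hfiber (m : M) : #{i | (F i).1 = m} ≤ c := by
    simpa using card_le_card_of_injOn (fun i => (F i).2) (t := univ) (fun _ _ => mem_univ _)
      fun a ha b hb hab =>
        hFinj (Prod.ext ((mem_filter.mp ha).2.trans (mem_filter.mp hb).2.symm) hab)
  have hcard : card ι = card M * c := by
    have := card_mul_eq_card_mul (fun i m => m ∈ g i) (s := univ) (t := univ)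
      (fun i _ => by simpa [bipartiteAbove] using hg i) (fun m _ => hreg m)
    simp only [card_univ, ← mul_assoc] at this
    exact Nat.eq_of_mul_eq_mul_right hj this
  refine ⟨fun i => (F i).1, fun i => (mem_product.mp (hFmem i)).1, fun m => ?_⟩
  have hsum : ∑ m, #{i | (F i).1 = m} = ∑ _m : M, c := by
    rw [← card_eq_sum_card_fiberwise (fun i _ => mem_univ _), card_univ, hcard, sum_const,
      card_univ, smul_eq_mul]
  exact (sum_eq_sum_iff_of_le fun m _ => hfiber m).mp hsum m (mem_univ m)

theorem exists_orderings_card_fiber_eq (c : ℕ) {j : ℕ} (g : ι → Finset M)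
    (hg : ∀ i, #(g i) = j) (hreg : ∀ m, #{i | m ∈ g i} = c * j) :
    ∃ e : ι → (Fin j ↪ M), (∀ i, univ.image (e i) = g i) ∧ ∀ m p, #{i | e i p = m} = c := by
  classical
  induction j generalizing g with
  | zero =>
    refine ⟨fun _ => Function.Embedding.ofIsEmpty, fun i => ?_, fun m p => p.elim0⟩
    simp [(card_eq_zero.mp (hg i)).symm]
  | succ j ih =>
    obtain ⟨f, hf, hfc⟩ := exists_choice_card_fiber_eq j.succ_pos g hg hreg
    have hsplit (m : M) : #{i | m ∈ (g i).erase (f i)} + #{i | f i = m} = #{i | m ∈ g i} := by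
      rw [← card_union_of_disjoint]
      · congr 1; ext i; simp only [mem_union, mem_filter, mem_erase]; grind
      · exact disjoint_filter.mpr fun i _ h h' => (mem_erase.mp h).1 h'.symm
    obtain ⟨e, he, hec⟩ := ih (fun i => (g i).erase (f i))
      (fun i => by simp [card_erase_of_mem (hf i), hg i])
      (fun m => by have := hsplit m; rw [hreg m, hfc m] at this; linarith)
    have hfe (i : ι) : f i ∉ Set.range (e i) := by
      rintro ⟨p, hp⟩
      have : e i p ∈ (g i).erase (f i) := he i ▸ mem_image_of_mem _ (mem_univ p)
      exact (mem_erase.mp this).1 hp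
    refine ⟨fun i => ⟨Fin.cons (f i) (e i), Fin.cons_injective_iff.mpr ⟨hfe i, (e i).injective⟩⟩,
      fun i => ?_, fun m p => Fin.cases (by simpa using hfc m) (fun q => by simpa using hec m q) p⟩
    rw [← insert_erase (hf i), ← he i]
    ext m
    simp [Fin.exists_fin_succ, eq_comm]

end BalancedOrdering

theorem exists_balanced_encoding_of_replication {S M : Type*} [Fintype S] [Fintype M]
    [DecidableEq M] (c : ℕ) (B : Finset (Finset M)) (hB : ∀ b ∈ B, #b = card S)
    (hrep : ∀ m, #{b ∈ B | m ∈ b} = c * card S) :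
    ∃ E : Finset (S ↪ M),
      (∀ (p : Finset M → Prop) [DecidablePred p],
        #(E.filter fun e : S ↪ M => p (univ.image e)) = #{b ∈ B | p b}) ∧
      ∀ m s, #{e ∈ E | e s = m} = c := by
  have card_filter_coe (p : Finset M → Prop) [DecidablePred p] :
      #{b : B | p b} = #{b ∈ B | p b} := by
    rw [univ_eq_attach, filter_attach, card_map, card_attach]
  obtain ⟨e, he, hec⟩ := exists_orderings_card_fiber_eq c (fun b : B => (b : Finset M))
    (fun b => hB b b.2) (fun m => (card_filter_coe (m ∈ ·)).trans (hrep m))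
  let σ := equivFin S
  let rule (b : B) : S ↪ M := σ.toEmbedding.trans (e b)
  have hrule (b : B) : univ.image (rule b) = b := by
    rw [← he b, ← image_univ_equiv σ, image_image]
    rfl
  have hinj : Function.Injective rule := fun a b hab => Subtype.ext <| by
    rw [← hrule a, ← hrule b, hab]
  refine ⟨univ.map ⟨rule, hinj⟩, fun p _ => ?_, fun m s => ?_⟩
  · rw [filter_map, card_map]
    simp only [Function.comp_def, Function.Embedding.coeFn_mk, hrule]
    exact card_filter_coe p
  · rw [filter_map, card_map, ← hec m (σ s)]
    rfl

theorem stmt14_general {S M : Type*} [Fintype S] [Fintype M] [DecidableEq M]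
    (k v t : ℕ) (hk : Fintype.card S = k) (hv : Fintype.card M = v)
    (ht : 1 ≤ t) (htk : t ≤ k)
    (B : Finset (Finset M)) (hblocks : ∀ b ∈ B, b.card = k)
    (hdesign : ∀ T : Finset M, T.card = t → (B.filter (fun b => T ⊆ b)).card = 1)
    (hdvd : v ∣ B.card) :
    ∃ E : Finset (S ↪ M),
      E.card = v.choose t / k.choose t ∧
      (∀ i < t, ∀ O : Finset M, O.card = i → ∀ m' ∉ O,
        (E.filter (fun e : S ↪ M =>
            insert m' O ⊆ Finset.image e Finset.univ)).card * (v - i)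
          = (k - i) * (E.filter (fun e : S ↪ M =>
              O ⊆ Finset.image e Finset.univ)).card) ∧
      (∀ (m : M) (s s' : S),
        (E.filter (fun e : S ↪ M => e s = m)).card
          = (E.filter (fun e : S ↪ M => e s' = m)).card) := by
  obtain ⟨c, hc⟩ := hdvd
  have hB : IsSteinerSystem t k B := ⟨hblocks, hdesign⟩
  have hrep (m : M) : #{b ∈ B | m ∈ b} = c * k := by
    have hv₀ : 0 < v := hv ▸ card_pos_iff.mpr ⟨m⟩
    have := hB.card_mul_card_filter_mem ht htk m
    rw [hv, hc, mul_assoc] at this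
    exact Nat.eq_of_mul_eq_mul_left hv₀ this
  obtain ⟨E, hEB, hEcol⟩ := exists_balanced_encoding_of_replication c B (hk ▸ hblocks) (hk ▸ hrep)
  have hE (T : Finset M) : #(E.filter fun e : S ↪ M => T ⊆ univ.image e) = #{b ∈ B | T ⊆ b} :=
    hEB (T ⊆ ·)
  refine ⟨E, ?_, fun i hi O hO m hm => ?_, fun m s s' => by rw [hEcol, hEcol]⟩
  · have hcard : #E = #B := by simpa using hE ∅
    rw [hcard, ← hv, ← hB.card_mul_choose, Nat.mul_div_cancel _ (Nat.choose_pos htk)]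
  · subst hO
    rw [hE, hE, ← hv]
    exact hB.card_filter_insert_superset_mul htk hi hm

/-- Main theorem: from a Steiner t-(v,k,1) design whose number of points v divides
its number of blocks b = C(v,t)/C(k,t), one obtains an optimal authentication code
for k equiprobable source states with v messages and C(v,t)/C(k,t) equiprobable
encoding rules that is (t−1)-fold secure against spoofing (P_{d_i} = (k−i)/(v−i)
for 0 ≤ i ≤ t−1) and provides perfect secrecy (each message occurs equally often
in every column of the encoding matrix). -/
theorem stmt14 {S M : Type*} [Fintype S] [Fintype M] [DecidableEq M] [DecidableEq S]
    (k v t : ℕ) (hk : Fintype.card S = k) (hv : Fintype.card M = v)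
    (ht : 1 ≤ t) (htk : t ≤ k) (hkv : k ≤ v)
    (B : Finset (Finset M)) (hblocks : ∀ b ∈ B, b.card = k)
    (hdesign : ∀ T : Finset M, T.card = t → (B.filter (fun b => T ⊆ b)).card = 1)
    (hdvd : v ∣ B.card) :
    ∃ E : Finset (S ↪ M),
      E.card = v.choose t / k.choose t ∧
      (∀ i < t, ∀ O : Finset M, O.card = i → ∀ m' ∉ O,
        (E.filter (fun e : S ↪ M =>
            insert m' O ⊆ Finset.image e Finset.univ)).card * (v - i)
          = (k - i) * (E.filter (fun e : S ↪ M =>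
              O ⊆ Finset.image e Finset.univ)).card) ∧
      (∀ (m : M) (s s' : S),
        (E.filter (fun e : S ↪ M => e s = m)).card
          = (E.filter (fun e : S ↪ M => e s' = m)).card) :=
  stmt14_general k v t hk hv ht htk B hblocks hdesign hdvd
end
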